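/- arXiv:2106.04116 — 4 statements merged into one kernel-verified Lean document; each statement's English description precedes it below -/
import Mathlib

section
/- Fix n ≥ 1 and nonnegative reals w₁,…,w_n. Define the n-dimensional weighted hypercube as the weighted graph on vertex set {0,1}ⁿ in which the weight between two vertices u, v is W(u,v) = w_k if u and v differ in exactly the k-th coordinate (and in no other coordinate), and W(u,v) = 0 otherwise. Then every subset U ⊆ {0,1}ⁿ with #U = 2^{n−1} + 1 contains a vertex u with ∑_{v∈U} W(u,v) ≥ √(w₁² + ⋯ + w_n²). -/
namespace Stmt15

noncomputable section

local notation "√" => Real.sqrt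

open Bool Finset Fintype Function LinearMap Module Module.DualBases

/-- The hypercube in dimension `n`. -/
@[reducible] def Q (n : ℕ) :=
  Fin n → Bool

instance (n) : Inhabited (Q n) := inferInstanceAs (Inhabited (Fin n → Bool))

instance (n) : Fintype (Q n) := inferInstanceAs (Fintype (Fin n → Bool))

/-- The projection from `Q n.succ` to `Q n` forgetting the first value. -/
def π {n : ℕ} : Q n.succ → Q n := fun p => p ∘ Fin.succ

namespace Q

@[ext]
theorem ext {n} {f g : Q n} (h : ∀ x, f x = g x) : f = g := funext h

variable (n : ℕ)

instance : Unique (Q 0) :=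
  ⟨⟨fun _ => true⟩, by intro; ext x; fin_cases x⟩

theorem card : card (Q n) = 2 ^ n := by simp [Q]

variable {n}

theorem succ_n_eq (p q : Q n.succ) : p = q ↔ p 0 = q 0 ∧ π p = π q := by
  constructor
  · rintro rfl; exact ⟨rfl, rfl⟩
  · rintro ⟨h₀, h⟩
    ext x
    by_cases hx : x = 0
    · rwa [hx]
    · rw [← Fin.succ_pred x hx]
      convert congr_fun h (Fin.pred x hx) <;> rfl

end Q

/-- Weighted adjacency. -/
def Wt {n : ℕ} (w : Fin n → ℝ) (p q : Q n) : ℝ :=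
  ∑ k, if p k ≠ q k ∧ ∀ l, l ≠ k → p l = q l then w k else 0

variable {n : ℕ}

theorem Wt_nonneg {w : Fin n → ℝ} (hw : ∀ k, 0 ≤ w k) (p q : Q n) : 0 ≤ Wt w p q := by
  refine Finset.sum_nonneg fun k _ => ?_
  split_ifs
  · exact hw k
  · exact le_refl 0

theorem Wt_proj {w : Fin (n + 1) → ℝ} (hw : ∀ k, 0 ≤ w k) {p q : Q n.succ} (h : p 0 = q 0) :
    Wt (w ∘ Fin.succ) (π p) (π q) ≤ Wt w p q := by
  rw [Wt, Wt, Fin.sum_univ_succ]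
  have key : ∀ j : Fin n,
      (if π p j ≠ π q j ∧ ∀ l, l ≠ j → π p l = π q l then (w ∘ Fin.succ) j else 0)
        = if p j.succ ≠ q j.succ ∧ ∀ l, l ≠ j.succ → p l = q l then w j.succ else 0 := by
    intro j
    refine if_congr ⟨?_, ?_⟩ rfl rfl
    · rintro ⟨h1, h2⟩
      refine ⟨h1, fun l hl => ?_⟩
      rcases eq_or_ne l 0 with rfl | hl0
      · exact h
      · rw [← Fin.succ_pred l hl0]
        exact h2 _ fun e => hl (by rw [← Fin.succ_pred l hl0, e])
    · rintro ⟨h1, h2⟩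
      exact ⟨h1, fun l hl => h2 l.succ fun e => hl (Fin.succ_injective _ e)⟩
  rw [Finset.sum_congr rfl fun j _ => key j]
  have h0 : (0:ℝ) ≤ if p 0 ≠ q 0 ∧ ∀ l, l ≠ 0 → p l = q l then w 0 else 0 := by
    split_ifs
    · exact hw 0
    · exact le_refl 0
  linarith

theorem Wt_cross {w : Fin (n + 1) → ℝ} (hw : ∀ k, 0 ≤ w k) {p q : Q n.succ} (h : p 0 ≠ q 0)
    (h2 : π p = π q) : w 0 ≤ Wt w p q := by
  rw [Wt, Fin.sum_univ_succ]
  have h1 : (if p 0 ≠ q 0 ∧ ∀ l, l ≠ 0 → p l = q l then w 0 else 0) = w 0 := by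
    refine if_pos ⟨h, fun l hl => ?_⟩
    rw [← Fin.succ_pred l hl]
    exact congr_fun h2 (l.pred hl)
  rw [h1]
  have h2' : (0:ℝ) ≤ ∑ i : Fin n,
      if p i.succ ≠ q i.succ ∧ ∀ l, l ≠ i.succ → p l = q l then w i.succ else 0 :=
    Finset.sum_nonneg fun i _ => by split_ifs; exacts [hw _, le_refl 0]
  linarith

/-- The free vector space on vertices of a hypercube, defined inductively. -/
@[reducible] def V : ℕ → Type
  | 0 => ℝ
  | Nat.succ n => V n × V n

namespace V

@[ext]
theorem ext {n : ℕ} {p q : V n.succ} (h₁ : p.1 = q.1) (h₂ : p.2 = q.2) : p = q := Prod.ext h₁ h₂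

variable (n : ℕ)

instance : DecidableEq (V n) := by induction n using Nat.rec <;> · dsimp only [V]; infer_instance

instance : AddCommGroup (V n) := by induction n using Nat.rec <;> · dsimp only [V]; infer_instance

instance : Module ℝ (V n) := by
  induction n using Nat.rec with
  | zero => exact (inferInstance : Module ℝ ℝ)
  | succ n ih => exact (inferInstance : Module ℝ (V n × V n))

end V

/-- The basis of `V` indexed by the hypercube, defined inductively. -/
noncomputable def e : ∀ {n}, Q n → V n
  | 0 => fun _ => (1 : ℝ)
  | Nat.succ _ => fun x => cond (x 0) (e (π x), 0) (0, e (π x))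

@[simp]
theorem e_zero_apply (x : Q 0) : e x = (1 : ℝ) :=
  rfl

/-- The dual basis to `e`, defined inductively. -/
noncomputable def ε : ∀ {n : ℕ}, Q n → V n →ₗ[ℝ] ℝ
  | 0, _ => LinearMap.id
  | Nat.succ _, p =>
    cond (p 0) ((ε <| π p).comp <| LinearMap.fst _ _ _) ((ε <| π p).comp <| LinearMap.snd _ _ _)

open Classical in
theorem duality (p q : Q n) : ε p (e q) = if p = q then 1 else 0 := by
  induction' n with n IH
  · rw [show p = q from Subsingleton.elim (α := Q 0) p q]
    dsimp [ε, e]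
  · dsimp [ε, e]
    cases hp : p 0 <;> cases hq : q 0
    all_goals
      repeat rw [Bool.cond_true]
      repeat rw [Bool.cond_false]
      simp only [LinearMap.fst_apply, LinearMap.snd_apply, LinearMap.comp_apply, IH, V]
      congr 1; simp [Q.succ_n_eq, hp, hq]

/-- Any vector in `V n` annihilated by all `ε p`'s is zero. -/
theorem epsilon_total {v : V n} (h : ∀ p : Q n, (ε p) v = 0) : v = 0 := by
  induction' n with n ih
  · dsimp [ε] at h; exact h fun _ => true
  · cases' v with v₁ v₂
    ext <;> change _ = (0 : V n) <;> simp only <;> apply ih <;> intro p <;>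
      [let q : Q n.succ := fun i => if h : i = 0 then true else p (i.pred h);
      let q : Q n.succ := fun i => if h : i = 0 then false else p (i.pred h)]
    all_goals
      specialize h q
      first
      | rw [ε, show q 0 = true from rfl, Bool.cond_true] at h
      | rw [ε, show q 0 = false from rfl, Bool.cond_false] at h
      rwa [show p = π q by ext; simp [q, Fin.succ_ne_zero, π]]

open Classical in
/-- `e` and `ε` are dual families of vectors. -/
theorem dualBases_e_ε (n : ℕ) : DualBases (@e n) (@ε n) where
  eval_same := by simp [duality]
  eval_of_ne _ _ h := by simp [duality, h]
  total h := sub_eq_zero.mp (epsilon_total fun i => by rw [map_sub, sub_eq_zero]; exact h i)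

theorem dim_V : Module.rank ℝ (V n) = 2 ^ n := by
  have : Module.rank ℝ (V n) = (2 ^ n : ℕ) := by
    classical
    rw [rank_eq_card_basis (dualBases_e_ε _).basis, Q.card]
  assumption_mod_cast

open Classical in
instance : FiniteDimensional ℝ (V n) :=
  Module.Finite.of_basis (dualBases_e_ε _).basis

theorem finrank_V : finrank ℝ (V n) = 2 ^ n := by
  have := @dim_V n
  rw [← finrank_eq_rank] at this; assumption_mod_cast

/-- Weighted Huang operator. -/
noncomputable def f : ∀ n, (Fin n → ℝ) → V n →ₗ[ℝ] V n
  | 0, _ => 0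
  | Nat.succ n, w =>
    LinearMap.prod (LinearMap.coprod (f n (w ∘ Fin.succ)) (w 0 • LinearMap.id))
      (LinearMap.coprod (w 0 • LinearMap.id) (-f n (w ∘ Fin.succ)))

@[simp]
theorem f_zero (w : Fin 0 → ℝ) : f 0 w = 0 :=
  rfl

theorem f_succ_apply (w : Fin (n + 1) → ℝ) (v : V n.succ) :
    f n.succ w v = (f n (w ∘ Fin.succ) v.1 + w 0 • v.2, w 0 • v.1 - f n (w ∘ Fin.succ) v.2) := by
  cases v
  rw [f]
  simp only [sub_eq_add_neg]
  rfl

theorem f_squared (w : Fin n → ℝ) (v : V n) :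
    (f n w) ((f n w) v) = (∑ k, w k ^ 2) • v := by
  induction n with
  | zero => simp
  | succ n IH =>
    cases' v with a b
    rw [f_succ_apply, f_succ_apply, Fin.sum_univ_succ]
    refine V.ext ?_ ?_ <;>
      simp only [map_add, map_smul, map_sub, IH, smul_add, smul_sub, smul_smul, add_smul,
        pow_two, Prod.smul_mk, Prod.mk_add_mk, Function.comp_apply, V] <;>
      abel

theorem f_matrix_le (w : Fin n → ℝ) (hw : ∀ k, 0 ≤ w k) :
    ∀ p q : Q n, |ε q (f n w (e p))| ≤ Wt w q p := by
  induction' n with n IH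
  · intro p q
    simp [Wt]
  · intro p q
    have hw' : ∀ k, 0 ≤ (w ∘ Fin.succ) k := fun k => hw _
    rw [f_succ_apply]
    dsimp only [e, ε]
    cases hp : p 0 <;> cases hq : q 0 <;>
        simp only [Bool.cond_true, Bool.cond_false, LinearMap.comp_apply] <;>
        dsimp only [LinearMap.fst_apply, LinearMap.snd_apply, V] <;>
        simp only [smul_zero, map_zero, add_zero, sub_zero, zero_add, zero_sub, map_smul,
          map_neg, abs_neg, smul_eq_mul, duality]
    · exact le_trans (IH _ hw' _ _) (Wt_proj hw (by rw [hq, hp]))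
    · rcases eq_or_ne (π q) (π p) with he | he
      · rw [if_pos he, mul_one, abs_of_nonneg (hw 0)]
        exact Wt_cross hw (by rw [hq, hp]; simp) he
      · rw [if_neg he, mul_zero, abs_zero]
        exact Wt_nonneg hw _ _
    · rcases eq_or_ne (π q) (π p) with he | he
      · rw [if_pos he, mul_one, abs_of_nonneg (hw 0)]
        exact Wt_cross hw (by rw [hq, hp]; simp) he
      · rw [if_neg he, mul_zero, abs_zero]
        exact Wt_nonneg hw _ _
    · exact le_trans (IH _ hw' _ _) (Wt_proj hw (by rw [hq, hp]))

variable {m : ℕ}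

/-- Knuth-style eigenvector construction. -/
noncomputable def g (m : ℕ) (w : Fin (m + 1) → ℝ) : V m →ₗ[ℝ] V m.succ :=
  LinearMap.prod (f m (w ∘ Fin.succ) + √ (∑ k, w k ^ 2) • LinearMap.id) (w 0 • LinearMap.id)

theorem g_apply (w : Fin (m + 1) → ℝ) (v : V m) :
    g m w v = (f m (w ∘ Fin.succ) v + √ (∑ k, w k ^ 2) • v, w 0 • v) := by
  delta g; erw [LinearMap.prod_apply]; simp

theorem g_injective {w : Fin (m + 1) → ℝ} (hw0 : w 0 ≠ 0) : Injective (g m w) := by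
  intro x₁ x₂ h
  rw [g_apply, g_apply] at h
  have := congrArg Prod.snd h
  simpa [hw0] using smul_right_injective (V m) hw0 this

theorem f_image_g (w : Fin (m + 1) → ℝ) (hw : ∀ k, 0 ≤ w k) (v : V m.succ)
    (hv : ∃ u, g m w u = v) : f m.succ w v = √ (∑ k, w k ^ 2) • v := by
  rcases hv with ⟨u, rfl⟩
  have hS : (0:ℝ) ≤ ∑ k, w k ^ 2 := Finset.sum_nonneg fun k _ => sq_nonneg _
  have hkey : √ (∑ k, w k ^ 2) * √ (∑ k, w k ^ 2)
      = w 0 * w 0 + ∑ k, (w ∘ Fin.succ) k ^ 2 := by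
    rw [Real.mul_self_sqrt hS, Fin.sum_univ_succ, pow_two]
    rfl
  rw [g_apply, f_succ_apply]
  refine V.ext ?_ ?_ <;>
    simp only [map_add, map_smul, f_squared, smul_add, smul_smul, smul_sub, Prod.smul_mk, V]
  · rw [hkey, add_smul]
    abel
  · rw [mul_comm]
    abel

local notation "dim " X:70 => Module.rank ℝ { x // x ∈ X }
local notation "fdim" => finrank ℝ
local notation "Span" => Submodule.span ℝ
local notation "Card " X:70 => #(Set.toFinset X)

open Classical in
theorem exists_eigenvalue (w : Fin (m + 1) → ℝ) (hw0 : w 0 ≠ 0) (H : Set (Q m.succ))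
    (hH : Card H ≥ 2 ^ m + 1) :
    ∃ y ∈ Span (e '' H) ⊓ range (g m w), y ≠ (0 : _) := by
  let W := Span (e '' H)
  let img := range (g m w)
  suffices 0 < dim (W ⊓ img) by
    exact mod_cast exists_mem_ne_zero_of_rank_pos this
  have dim_le : dim (W ⊔ img) ≤ 2 ^ (m + 1 : Cardinal) := by
    convert ← Submodule.rank_le (W ⊔ img)
    rw [← Nat.cast_succ]
    apply dim_V
  have dim_add : dim (W ⊔ img) + dim (W ⊓ img) = dim W + 2 ^ m := by
    convert ← Submodule.rank_sup_add_rank_inf_eq W img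
    rw [rank_range_of_injective (g m w) (g_injective hw0)]
    apply dim_V
  have dimW : dim W = card H := by
    have li : LinearIndependent ℝ (H.restrict e) := by
      convert (dualBases_e_ε m.succ).basis.linearIndependent.comp _ Subtype.val_injective
      rw [(dualBases_e_ε _).coe_basis]
      all_goals rfl
    have hdW := rank_span li
    rw [show Set.range (H.restrict e) = e '' H from Set.range_domRestrict e H] at hdW
    convert hdW
    rw [← (dualBases_e_ε _).coe_basis, Cardinal.mk_image_eq (dualBases_e_ε _).basis.injective,
      Cardinal.mk_fintype]
  rw [← finrank_eq_rank ℝ] at dim_le dim_add dimW ⊢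
  rw [← finrank_eq_rank ℝ, ← finrank_eq_rank ℝ] at dim_add
  norm_cast at dim_le dim_add dimW ⊢
  rw [pow_succ'] at dim_le
  rw [Set.toFinset_card] at hH
  linarith

open Classical in
theorem huang_w (w : Fin (m + 1) → ℝ) (hw : ∀ k, 0 ≤ w k) (hw0 : w 0 ≠ 0)
    (U : Finset (Q m.succ)) (hU : 2 ^ m + 1 ≤ U.card) :
    ∃ q ∈ U, √ (∑ k, w k ^ 2) ≤ ∑ p ∈ U, Wt w q p := by
  rcases exists_eigenvalue w hw0 ↑U (by rw [Finset.toFinset_coe]; exact hU) with ⟨y, ⟨⟨y_mem_H, y_mem_g⟩, y_ne⟩⟩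
  have coeffs_support : ((dualBases_e_ε m.succ).coeffs y).support ⊆ U := by
    intro p p_in
    rw [Finsupp.mem_support_iff] at p_in
    exact (dualBases_e_ε _).mem_of_mem_span y_mem_H p p_in
  obtain ⟨q, H_max⟩ : ∃ q : Q m.succ, ∀ q' : Q m.succ, |(ε q' : _) y| ≤ |ε q y| :=
    Finite.exists_max _
  have H_q_pos : 0 < |ε q y| := by
    contrapose! y_ne
    exact epsilon_total fun p => abs_nonpos_iff.mp (le_trans (H_max p) y_ne)
  refine ⟨q, (dualBases_e_ε _).mem_of_mem_span y_mem_H q (abs_pos.mp H_q_pos), ?_⟩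
  let s := √ (∑ k, w k ^ 2)
  suffices s * |ε q y| ≤ (∑ p ∈ U, Wt w q p) * |ε q y| from (mul_le_mul_iff_left₀ H_q_pos).mp ‹_›
  let coeffs := (dualBases_e_ε m.succ).coeffs
  calc
    s * |ε q y| = |ε q (s • y)| := by
      rw [map_smul, smul_eq_mul, abs_mul, abs_of_nonneg (Real.sqrt_nonneg _)]
    _ = |ε q (f m.succ w y)| := by rw [← f_image_g w hw y (by simpa using y_mem_g)]
    _ = |ε q (f m.succ w (lc _ (coeffs y)))| := by rw [(dualBases_e_ε _).lc_coeffs y]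
    _ =
        |(coeffs y).sum fun (i : Q m.succ) (a : ℝ) =>
            a • (ε q ∘ f m.succ w ∘ fun i : Q m.succ => e i) i| := by
      erw [(f m.succ w).map_finsupp_linearCombination, (ε q).map_finsupp_linearCombination,
           Finsupp.linearCombination_apply]
    _ ≤ ∑ p ∈ (coeffs y).support, |coeffs y p * (ε q <| f m.succ w <| e p)| :=
      (norm_sum_le _ fun p => coeffs y p * _)
    _ ≤ ∑ p ∈ (coeffs y).support, Wt w q p * |ε q y| := by
      refine Finset.sum_le_sum fun p _ => ?_
      rw [abs_mul, mul_comm]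
      exact mul_le_mul (f_matrix_le w hw p q) (H_max p) (abs_nonneg _) (Wt_nonneg hw _ _)
    _ ≤ ∑ p ∈ U, Wt w q p * |ε q y| := by
      refine Finset.sum_le_sum_of_subset_of_nonneg coeffs_support fun p _ _ => ?_
      exact mul_nonneg (Wt_nonneg hw _ _) (abs_nonneg _)
    _ = (∑ p ∈ U, Wt w q p) * |ε q y| := by rw [Finset.sum_mul]

end

end Stmt15

/-- in the `n`-dimensional weighted hypercube with edge weights
`w₁, …, w_n`, every set of `2^{n−1} + 1` vertices contains a vertex of induced
weighted degree at least `√(w₁² + ⋯ + w_n²)`. -/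
theorem stmt_15 (n : ℕ) (hn : 1 ≤ n) (w : Fin n → ℝ) (hw : ∀ k, 0 ≤ w k) :
    let W : (Fin n → Bool) → (Fin n → Bool) → ℝ := fun u v =>
      ∑ k, if u k ≠ v k ∧ ∀ l, l ≠ k → u l = v l then w k else 0
    ∀ U : Finset (Fin n → Bool), U.card = 2 ^ (n - 1) + 1 →
      ∃ u ∈ U, Real.sqrt (∑ k, w k ^ 2) ≤ ∑ v ∈ U, W u v := by
  classical
  intro W U hU
  obtain ⟨m, rfl⟩ : ∃ m, n = m + 1 := ⟨n - 1, (Nat.succ_pred_eq_of_pos hn).symm⟩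
  simp only [Nat.add_sub_cancel] at hU
  by_cases hz : ∀ k, w k = 0
  · obtain ⟨u, hu⟩ : U.Nonempty := Finset.card_pos.mp (by rw [hU]; positivity)
    refine ⟨u, hu, ?_⟩
    have h0 : ∑ k, w k ^ 2 = 0 := by simp [hz]
    rw [h0, Real.sqrt_zero]
    exact Finset.sum_nonneg fun v _ => Stmt15.Wt_nonneg hw u v
  · push_neg at hz
    obtain ⟨k0, hk0⟩ := hz
    set σ : Fin (m + 1) ≃ Fin (m + 1) := Equiv.swap 0 k0 with hσ
    set w' : Fin (m + 1) → ℝ := w ∘ σ with hw'def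
    have hw' : ∀ k, 0 ≤ w' k := fun k => hw _
    have hw0' : w' 0 ≠ 0 := by
      simpa [hw'def, hσ, Equiv.swap_apply_left] using hk0
    set T : Stmt15.Q (m + 1) → Stmt15.Q (m + 1) := fun p => p ∘ σ with hT
    have hTinj : Function.Injective T := by
      intro p q h
      funext k
      have := congr_fun h (σ.symm k)
      simpa [hT] using this
    set U' := U.image T with hU'
    have hU'card : 2 ^ m + 1 ≤ U'.card := by
      rw [hU', Finset.card_image_of_injective _ hTinj, hU]
    obtain ⟨q, hqU', hq⟩ := Stmt15.huang_w w' hw' hw0' U' hU'card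
    obtain ⟨u, huU, rfl⟩ := Finset.mem_image.mp hqU'
    refine ⟨u, huU, ?_⟩
    have hsum : ∑ k, w' k ^ 2 = ∑ k, w k ^ 2 := σ.sum_comp fun k => w k ^ 2
    have hWt : ∀ a b : Stmt15.Q (m + 1), Stmt15.Wt w' (T a) (T b) = Stmt15.Wt w a b := by
      intro a b
      rw [Stmt15.Wt, Stmt15.Wt,
        ← σ.sum_comp fun k => if a k ≠ b k ∧ ∀ l, l ≠ k → a l = b l then w k else 0]
      refine Finset.sum_congr rfl fun k _ => ?_
      refine if_congr (and_congr_right fun _ => ⟨?_, ?_⟩) rfl rfl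
      · intro h l hl
        have h1 : σ.symm l ≠ k := fun e => hl (by rw [← e, Equiv.apply_symm_apply])
        have := h (σ.symm l) h1
        simpa [hT, Equiv.apply_symm_apply] using this
      · intro h l hl
        exact h (σ l) fun e => hl (σ.injective e)
    have hfin : ∑ p ∈ U', Stmt15.Wt w' (T u) p = ∑ v ∈ U, W u v := by
      rw [hU', Finset.sum_image fun x _ y _ h => hTinj h]
      exact Finset.sum_congr rfl fun v _ => hWt u v
    calc Real.sqrt (∑ k, w k ^ 2) = Real.sqrt (∑ k, w' k ^ 2) := by rw [hsum]
      _ ≤ ∑ p ∈ U', Stmt15.Wt w' (T u) p := hq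
      _ = ∑ v ∈ U, W u v := hfin
end

section
/- Let G be a finite simple graph on a nonempty vertex set V = {1,…,n} with edge set E, and let ω ≥ 1 be its clique number (the largest size of a set of pairwise adjacent vertices). Then the maximum of 2·∑_{{i,j}∈E} x_i·x_j over the standard simplex {x ∈ ℝⁿ : x_i ≥ 0 for all i, ∑_i x_i = 1} equals 1 − 1/ω (Motzkin–Straus). -/
open Finset

variable {n : ℕ} (G : SimpleGraph (Fin n)) [DecidableRel G.Adj]

def MSB (x y : Fin n → ℝ) : ℝ := ∑ i, ∑ j, (if G.Adj i j then (1:ℝ) else 0) * (x i * y j)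

def MSd (t : Fin n) (x : Fin n → ℝ) : ℝ := ∑ j, (if G.Adj t j then (1:ℝ) else 0) * x j

def MSdelta (t : Fin n) : Fin n → ℝ := fun k => if k = t then 1 else 0

lemma MSB_eq (x : Fin n → ℝ) :
    MSB G x x = ∑ i, ∑ j, if G.Adj i j then x i * x j else 0 := by
  simp [MSB, boole_mul]

lemma MSB_expand (x u : Fin n → ℝ) (t : ℝ) :
    MSB G (x + t • u) (x + t • u)
      = MSB G x x + t * MSB G x u + t * MSB G u x + t^2 * MSB G u u := by
  simp only [MSB, Pi.add_apply, Pi.smul_apply, smul_eq_mul, Finset.mul_sum,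
    ← Finset.sum_add_distrib]
  refine Finset.sum_congr rfl fun i _ => ?_
  refine Finset.sum_congr rfl fun j _ => ?_
  ring

lemma MSB_sub_right (x u v : Fin n → ℝ) :
    MSB G x (u - v) = MSB G x u - MSB G x v := by
  simp only [MSB, Pi.sub_apply, ← Finset.sum_sub_distrib]
  exact Finset.sum_congr rfl fun i _ => Finset.sum_congr rfl fun j _ => by ring

lemma MSB_sub_left (x u v : Fin n → ℝ) :
    MSB G (u - v) x = MSB G u x - MSB G v x := by
  simp only [MSB, Pi.sub_apply, ← Finset.sum_sub_distrib]
  exact Finset.sum_congr rfl fun i _ => Finset.sum_congr rfl fun j _ => by ring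

lemma MSB_delta_right (x : Fin n → ℝ) (t : Fin n) : MSB G x (MSdelta t) = MSd G t x := by
  unfold MSB MSdelta MSd
  simp only [mul_ite, mul_one, mul_zero, Finset.sum_ite_eq' Finset.univ t]
  simp only [Finset.mem_univ, if_true]
  refine Finset.sum_congr rfl fun i _ => ?_
  simp only [G.adj_comm i t]

lemma MSB_delta_left (x : Fin n → ℝ) (t : Fin n) : MSB G (MSdelta t) x = MSd G t x := by
  unfold MSB MSdelta MSd
  rw [Finset.sum_comm]
  refine Finset.sum_congr rfl fun j _ => ?_
  simp [mul_ite, ite_mul, Finset.sum_ite_eq' Finset.univ t]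

lemma MSB_delta_delta (s t : Fin n) :
    MSB G (MSdelta s) (MSdelta t) = if G.Adj s t then 1 else 0 := by
  rw [MSB_delta_left]
  unfold MSd MSdelta
  simp [Finset.sum_ite_eq']

lemma MSd_delta_sub (t s r : Fin n) :
    MSd G t (MSdelta s - MSdelta r)
      = (if G.Adj t s then (1:ℝ) else 0) - (if G.Adj t r then 1 else 0) := by
  unfold MSd MSdelta
  simp [mul_sub, Finset.sum_sub_distrib, mul_ite, Finset.sum_ite_eq' Finset.univ]

lemma ms_shift (x : Fin n → ℝ) (i j : Fin n) (hij : i ≠ j) (hnadj : ¬ G.Adj i j) :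
    MSB G (x + x i • (MSdelta j - MSdelta i)) (x + x i • (MSdelta j - MSdelta i))
      = MSB G x x + 2 * x i * (MSd G j x - MSd G i x) := by
  have hnadj' : ¬ G.Adj j i := fun h => hnadj h.symm
  rw [MSB_expand]
  simp only [MSB_sub_right, MSB_sub_left, MSB_delta_right, MSB_delta_left, MSB_delta_delta, MSd_delta_sub]
  rw [if_neg hnadj, if_neg hnadj', if_neg (G.irrefl), if_neg (G.irrefl)]
  ring

lemma ms_bound (ω : ℕ) (hω1 : 1 ≤ ω)
    (hωmax : ∀ s : Finset (Fin n), G.IsClique (s : Set (Fin n)) → s.card ≤ ω) :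
    ∀ m : ℕ, ∀ x : Fin n → ℝ, (∀ i, 0 ≤ x i) → (∑ i, x i) = 1 →
      (Finset.univ.filter (fun i => x i ≠ 0)).card ≤ m →
      MSB G x x ≤ 1 - 1 / (ω : ℝ) := by
  intro m
  induction m with
  | zero =>
    intro x hx0 hx1 hcard
    have hz : ∀ i, x i = 0 := by
      intro i; by_contra h
      have hi : i ∈ Finset.univ.filter (fun i => x i ≠ 0) := by simp [h]
      have := Finset.card_pos.mpr ⟨i, hi⟩; omega
    simp [hz] at hx1
  | succ m IH =>
    intro x hx0 hx1 hcard
    set S := Finset.univ.filter (fun i => x i ≠ 0) with hS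
    by_cases hcl : ∃ i ∈ S, ∃ j ∈ S, i ≠ j ∧ ¬ G.Adj i j
    · obtain ⟨i0, hi0, j0, hj0, hij0, hnadj0⟩ := hcl
      have key : ∀ i j : Fin n, i ∈ S → j ∈ S → i ≠ j → ¬ G.Adj i j →
          MSd G i x ≤ MSd G j x → MSB G x x ≤ 1 - 1/(ω:ℝ) := by
        intro i j hiS hjS hij hnadj hd
        set x' := x + x i • (MSdelta j - MSdelta i) with hx'
        have hvi : x' i = 0 := by
          simp [hx', MSdelta, hij]
        have hvj : x' j = x j + x i := by
          simp [hx', MSdelta, Ne.symm hij]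
        have hvk : ∀ k, k ≠ i → k ≠ j → x' k = x k := by
          intro k hki hkj
          simp [hx', MSdelta, hki, hkj]
        have hx'0 : ∀ k, 0 ≤ x' k := by
          intro k
          by_cases hki : k = i
          · rw [hki, hvi]
          · by_cases hkj : k = j
            · rw [hkj, hvj]; exact add_nonneg (hx0 j) (hx0 i)
            · rw [hvk k hki hkj]; exact hx0 k
        have hsum' : ∑ k, x' k = 1 := by
          simp only [hx', Pi.add_apply, Pi.smul_apply, smul_eq_mul, Pi.sub_apply, MSdelta]
          rw [Finset.sum_add_distrib]
          simp [mul_sub, Finset.sum_sub_distrib, Finset.mul_sum, mul_ite,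
            Finset.sum_ite_eq' Finset.univ, hx1]
        have hxj : x j ≠ 0 := by
          have := hjS; rw [hS, Finset.mem_filter] at this; exact this.2
        have hsupp : (Finset.univ.filter (fun k => x' k ≠ 0)) ⊆ S.erase i := by
          intro k hk
          rw [Finset.mem_filter] at hk
          have hk' := hk.2
          have hki : k ≠ i := by rintro rfl; exact hk' hvi
          rw [Finset.mem_erase]
          refine ⟨hki, ?_⟩
          rw [hS, Finset.mem_filter]
          refine ⟨Finset.mem_univ k, ?_⟩
          by_cases hkj : k = j
          · subst hkj; exact hxj
          · rw [hvk k hki hkj] at hk'; exact hk'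
        have hcard' : (Finset.univ.filter (fun k => x' k ≠ 0)).card ≤ m := by
          have h1 := Finset.card_le_card hsupp
          rw [Finset.card_erase_of_mem hiS] at h1
          have h2 : 1 ≤ S.card := Finset.card_pos.mpr ⟨i, hiS⟩
          omega
        have hIH := IH x' hx'0 hsum' hcard'
        have hshift := ms_shift G x i j hij hnadj
        have hmono : MSB G x x ≤ MSB G x' x' := by
          rw [hx', hshift]
          nlinarith [hx0 i, hd]
        linarith
      rcases le_total (MSd G i0 x) (MSd G j0 x) with h | h
      · exact key i0 j0 hi0 hj0 hij0 hnadj0 h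
      · exact key j0 i0 hj0 hi0 hij0.symm (fun h' => hnadj0 h'.symm) h
    · push_neg at hcl
      have hclique : G.IsClique (S : Set (Fin n)) := by
        intro a ha b hb hab
        exact hcl a (Finset.mem_coe.mp ha) b (Finset.mem_coe.mp hb) hab
      have hcardω : S.card ≤ ω := hωmax S hclique
      have hωpos : (0:ℝ) < ω := by exact_mod_cast hω1
      have h1 : MSB G x x ≤ ∑ i, ∑ j, (if i ≠ j then x i * x j else 0) := by
        unfold MSB
        refine Finset.sum_le_sum fun i _ => Finset.sum_le_sum fun j _ => ?_
        by_cases hadj : G.Adj i j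
        · rw [if_pos hadj, if_pos (G.ne_of_adj hadj), one_mul]
        · rw [if_neg hadj, zero_mul]
          split_ifs
          · exact mul_nonneg (hx0 i) (hx0 j)
          · exact le_refl 0
      have h2 : ∑ i, ∑ j, (if i ≠ j then x i * x j else 0) = 1 - ∑ i, (x i)^2 := by
        have hterm : ∀ i j : Fin n, (if i ≠ j then x i * x j else 0)
            = x i * x j - (if i = j then x i * x j else 0) := by
          intro i j; by_cases h : i = j <;> simp [h]
        calc ∑ i, ∑ j, (if i ≠ j then x i * x j else 0)
            = ∑ i, ((∑ j, x i * x j) - ∑ j, (if i = j then x i * x j else 0)) := by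
              refine Finset.sum_congr rfl fun i _ => ?_
              rw [← Finset.sum_sub_distrib]
              exact Finset.sum_congr rfl fun j _ => hterm i j
          _ = ∑ i, (x i - (x i)^2) := by
              refine Finset.sum_congr rfl fun i _ => ?_
              rw [← Finset.mul_sum, hx1, Finset.sum_ite_eq Finset.univ i]
              simp [sq]
          _ = 1 - ∑ i, (x i)^2 := by
              rw [Finset.sum_sub_distrib, hx1]
      have h3 : (1:ℝ)/ω ≤ ∑ i, (x i)^2 := by
        have hxS : ∑ i ∈ S, x i = 1 := by
          rw [hS, Finset.sum_filter_ne_zero]; exact hx1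
        have hcs : (∑ i ∈ S, x i)^2 ≤ S.card * ∑ i ∈ S, (x i)^2 :=
          sq_sum_le_card_mul_sum_sq
        have hle : ∑ i ∈ S, (x i)^2 ≤ ∑ i, (x i)^2 :=
          Finset.sum_le_sum_of_subset_of_nonneg (Finset.subset_univ S)
            (fun i _ _ => sq_nonneg (x i))
        have hsq : (0:ℝ) ≤ ∑ i ∈ S, (x i)^2 :=
          Finset.sum_nonneg fun i _ => sq_nonneg (x i)
        have hcard_le : (S.card : ℝ) ≤ (ω : ℝ) := by exact_mod_cast hcardω
        rw [hxS] at hcs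
        rw [div_le_iff₀ hωpos]
        nlinarith
      linarith



/-- Motzkin–Straus: for a finite simple graph with clique number `ω ≥ 1`,
the maximum of `2·∑_{{i,j}∈E} x_i x_j` (written as the sum over ordered adjacent pairs)
over the standard simplex equals `1 − 1/ω`. -/
theorem stmt_16 {n : ℕ} (hn : 1 ≤ n) (G : SimpleGraph (Fin n)) [DecidableRel G.Adj]
    (ω : ℕ) (hω1 : 1 ≤ ω)
    (hωclique : ∃ s : Finset (Fin n), G.IsNClique ω s)
    (hωmax : ∀ s : Finset (Fin n), G.IsClique (s : Set (Fin n)) → s.card ≤ ω) :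
    IsGreatest {r | ∃ x : Fin n → ℝ, (∀ i, 0 ≤ x i) ∧ (∑ i, x i) = 1 ∧
        r = ∑ i, ∑ j, if G.Adj i j then x i * x j else 0}
      (1 - 1 / (ω : ℝ)) := by
  have hωpos : (0:ℝ) < ω := by exact_mod_cast hω1
  constructor
  · obtain ⟨s, hs⟩ := hωclique
    refine ⟨fun k => if k ∈ s then (ω:ℝ)⁻¹ else 0, fun i => ?_, ?_, ?_⟩
    · dsimp only
      split_ifs
      · positivity
      · exact le_refl 0
    · rw [Finset.sum_ite_mem, Finset.univ_inter, Finset.sum_const, hs.2,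
        nsmul_eq_mul, mul_inv_cancel₀ (ne_of_gt hωpos)]
    · have hterm : ∀ i j : Fin n,
          (if G.Adj i j then (if i ∈ s then (ω:ℝ)⁻¹ else 0) * (if j ∈ s then (ω:ℝ)⁻¹ else 0) else 0)
            = if i ∈ s then (if j ∈ s.erase i then (ω:ℝ)⁻¹ * (ω:ℝ)⁻¹ else 0) else 0 := by
        intro i j
        by_cases hi : i ∈ s
        · by_cases hj : j ∈ s
          · by_cases hij : j = i
            · subst hij
              simp [hi, hj, G.irrefl]
            · have hadj : G.Adj i j :=
                hs.1 (Finset.mem_coe.mpr hi) (Finset.mem_coe.mpr hj) (Ne.symm hij)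
              simp [hi, hj, hij, hadj, Finset.mem_erase]
          · have hne : j ∉ s.erase i := fun h => hj (Finset.mem_of_mem_erase h)
            simp [hi, hj, hne]
        · simp [hi]
      have inner : ∀ i : Fin n,
          (∑ j, if i ∈ s then (if j ∈ s.erase i then (ω:ℝ)⁻¹ * (ω:ℝ)⁻¹ else 0) else 0)
            = if i ∈ s then ((ω - 1 : ℕ) : ℝ) * ((ω:ℝ)⁻¹ * (ω:ℝ)⁻¹) else 0 := by
        intro i
        by_cases hi : i ∈ s
        · simp only [hi, if_true]
          rw [Finset.sum_ite_mem, Finset.univ_inter, Finset.sum_const, nsmul_eq_mul,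
            Finset.card_erase_of_mem hi, hs.2]
        · simp [hi]
      have hsum : (∑ i, ∑ j, if G.Adj i j then
            (if i ∈ s then (ω:ℝ)⁻¹ else 0) * (if j ∈ s then (ω:ℝ)⁻¹ else 0) else 0)
          = (ω : ℝ) * (((ω - 1 : ℕ) : ℝ) * ((ω:ℝ)⁻¹ * (ω:ℝ)⁻¹)) := by
        simp only [hterm]
        rw [Finset.sum_congr rfl fun i _ => inner i, Finset.sum_ite_mem,
          Finset.univ_inter, Finset.sum_const, nsmul_eq_mul, hs.2]
      dsimp only
      rw [hsum, Nat.cast_sub hω1, Nat.cast_one]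
      field_simp
  · rintro r ⟨x, hx0, hx1, rfl⟩
    rw [← MSB_eq]
    exact ms_bound G ω hω1 hωmax (Finset.univ.filter (fun i => x i ≠ 0)).card x hx0 hx1 le_rfl
end

section
/- Let G be a finite simple graph on V = {1,…,n}, n ≥ 1, with edge set E, and for A ⊆ V let e(A) denote the number of edges of G with both endpoints in A. Then max over nonempty A ⊆ V of 2·e(A)/(#A)² = sup over x ∈ ℝⁿ_{≥0} ∖ {0} of 2·∑_{{i,j}∈E} x_i x_j / ‖x‖₁² = max over x ∈ ℝⁿ ∖ {0} of 2·∑_{{i,j}∈E} x_i x_j / ‖x‖₁², where ‖x‖₁ = ∑_i |x_i|. -/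
open Finset

namespace Stmt17Aux

variable {n : ℕ} (G : SimpleGraph (Fin n)) [DecidableRel G.Adj]

def Bf (x y : Fin n → ℝ) : ℝ := ∑ i, ∑ j, if G.Adj i j then x i * y j else 0
def Qf (x : Fin n → ℝ) : ℝ := ∑ i, ∑ j, if G.Adj i j then x i * x j else 0
def rf (x : Fin n → ℝ) (i : Fin n) : ℝ := ∑ j, if G.Adj i j then x j else 0

lemma Bf_add_left (x u y : Fin n → ℝ) :
    Bf G (x + u) y = Bf G x y + Bf G u y := by
  unfold Bf
  rw [← Finset.sum_add_distrib]
  refine Finset.sum_congr rfl fun i _ => ?_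
  rw [← Finset.sum_add_distrib]
  refine Finset.sum_congr rfl fun j _ => ?_
  by_cases h : G.Adj i j <;> simp [h, add_mul]

lemma Bf_add_right (x y u : Fin n → ℝ) :
    Bf G x (y + u) = Bf G x y + Bf G x u := by
  unfold Bf
  rw [← Finset.sum_add_distrib]
  refine Finset.sum_congr rfl fun i _ => ?_
  rw [← Finset.sum_add_distrib]
  refine Finset.sum_congr rfl fun j _ => ?_
  by_cases h : G.Adj i j <;> simp [h, mul_add]

lemma Bf_single_left (i : Fin n) (t : ℝ) (y : Fin n → ℝ) :
    Bf G (Pi.single i t) y = t * rf G y i := by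
  unfold Bf rf
  rw [Fintype.sum_eq_single i]
  · rw [Finset.mul_sum]
    refine Finset.sum_congr rfl fun j _ => ?_
    by_cases h : G.Adj i j <;> simp [h]
  · intro k hk
    refine Finset.sum_eq_zero fun j _ => ?_
    by_cases h : G.Adj k j <;> simp [h, Pi.single_eq_of_ne hk]

lemma Bf_single_right (x : Fin n → ℝ) (j : Fin n) (t : ℝ) :
    Bf G x (Pi.single j t) = t * rf G x j := by
  unfold Bf rf
  rw [Finset.sum_comm]
  rw [Fintype.sum_eq_single j]
  · rw [Finset.mul_sum]
    refine Finset.sum_congr rfl fun k _ => ?_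
    by_cases h : G.Adj k j
    · simp [h, G.adj_comm k j |>.mp h, mul_comm]
    · have h' : ¬ G.Adj j k := fun hh => h ((G.adj_comm j k).mp hh)
      simp [h, h']
  · intro k hk
    refine Finset.sum_eq_zero fun l _ => ?_
    by_cases h : G.Adj l k <;> simp [h, Pi.single_eq_of_ne hk]

lemma rf_single (i : Fin n) (t : ℝ) (a : Fin n) :
    rf G (Pi.single i t) a = if G.Adj a i then t else 0 := by
  unfold rf
  rw [Fintype.sum_eq_single i]
  · simp
  · intro k hk
    by_cases h : G.Adj a k <;> simp [h, Pi.single_eq_of_ne hk]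

lemma Qf_shift (x : Fin n → ℝ) (i j : Fin n) (hij : ¬ G.Adj i j) (t : ℝ) :
    Qf G (x + Pi.single i t + Pi.single j (-t)) = Qf G x + 2 * t * (rf G x i - rf G x j) := by
  have hji : ¬ G.Adj j i := fun h => hij ((G.adj_comm j i).mp h)
  have hii : ¬ G.Adj i i := G.irrefl
  have hjj : ¬ G.Adj j j := G.irrefl
  have e1 : Qf G (x + Pi.single i t + Pi.single j (-t))
      = Bf G (x + Pi.single i t + Pi.single j (-t)) (x + Pi.single i t + Pi.single j (-t)) := rfl
  rw [e1, Bf_add_left, Bf_add_left, Bf_add_right, Bf_add_right, Bf_add_right,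
    Bf_add_right, Bf_add_right, Bf_add_right, Bf_single_right, Bf_single_right,
    Bf_single_right, Bf_single_right, Bf_single_right, Bf_single_right,
    Bf_single_left, Bf_single_left, rf_single, rf_single, rf_single, rf_single]
  have hQ : Bf G x x = Qf G x := rfl
  rw [hQ]
  simp only [hii, hjj, hij, hji, if_false]
  ring

lemma step (x : Fin n → ℝ) (hx : ∀ i, 0 ≤ x i) (hsum : ∑ i, x i = 1)
    (i j : Fin n) (hi : x i ≠ 0) (hj : x j ≠ 0) (hne : i ≠ j) (hnadj : ¬ G.Adj i j)
    (hc : 0 ≤ rf G x i - rf G x j) :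
    ∃ y : Fin n → ℝ, (∀ k, 0 ≤ y k) ∧ (∑ k, y k) = 1 ∧
      (univ.filter fun k => y k ≠ 0).card < (univ.filter fun k => x k ≠ 0).card ∧
      Qf G x ≤ Qf G y := by
  set y := x + Pi.single i (x j) + Pi.single j (-(x j)) with hy
  have hyi : y i = x i + x j := by
    simp [hy, Pi.single_eq_same, Pi.single_eq_of_ne hne]
  have hyj : y j = 0 := by
    simp [hy, Pi.single_eq_same, Pi.single_eq_of_ne hne.symm]
  have hyk : ∀ k, k ≠ i → k ≠ j → y k = x k := by
    intro k hki hkj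
    simp [hy, Pi.single_eq_of_ne hki, Pi.single_eq_of_ne hkj]
  refine ⟨y, ?_, ?_, ?_, ?_⟩
  · intro k
    by_cases hki : k = i
    · subst hki; rw [hyi]; exact add_nonneg (hx k) (hx j)
    · by_cases hkj : k = j
      · subst hkj; rw [hyj]
      · rw [hyk k hki hkj]; exact hx k
  · have e1 : ∑ k, Pi.single i (x j) k = x j := by
      rw [Fintype.sum_eq_single i] <;> simp [Pi.single_eq_of_ne]
      intro k hk; exact Pi.single_eq_of_ne hk _
    have e2 : ∑ k, Pi.single j (-(x j)) k = -(x j) := by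
      rw [Fintype.sum_eq_single j] <;> simp [Pi.single_eq_of_ne]
      intro k hk; exact Pi.single_eq_of_ne hk _
    simp only [hy, Pi.add_apply, Finset.sum_add_distrib, e1, e2, hsum]
    ring
  · apply Finset.card_lt_card
    constructor
    · intro k hk
      simp only [mem_filter, mem_univ, true_and] at hk ⊢
      by_cases hkj : k = j
      · subst hkj; exact absurd hyj hk
      · by_cases hki : k = i
        · subst hki
          exact hi
        · rw [hyk k hki hkj] at hk; exact hk
    · intro hsub
      have hjmem : j ∈ univ.filter fun k => x k ≠ 0 := by simp [hj]
      have := hsub hjmem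
      simp only [mem_filter, mem_univ, true_and] at this
      exact this hyj
  · rw [hy, Qf_shift G x i j hnadj (x j)]
    nlinarith [hx j, hc]

lemma clique_bound (x : Fin n → ℝ) (hsum : ∑ i, x i = 1)
    (hcl : ∀ i ∈ univ.filter (fun k => x k ≠ 0), ∀ j ∈ univ.filter (fun k => x k ≠ 0),
      i ≠ j → G.Adj i j) :
    ∃ s : Finset (Fin n), s.Nonempty ∧
      Qf G x ≤ (((s ×ˢ s).filter fun p => G.Adj p.1 p.2).card : ℝ) / (s.card : ℝ) ^ 2 := by
  set s := univ.filter (fun k => x k ≠ 0) with hs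
  have hmem : ∀ k, k ∈ s ↔ x k ≠ 0 := by intro k; simp [hs]
  have hns : s.Nonempty := by
    by_contra h
    rw [Finset.not_nonempty_iff_eq_empty] at h
    have : ∀ k, x k = 0 := by
      intro k
      by_contra hk
      have : k ∈ s := (hmem k).mpr hk
      simp [h] at this
    rw [Finset.sum_congr rfl (fun k _ => this k)] at hsum
    simp at hsum
  refine ⟨s, hns, ?_⟩
  have hk1 : 1 ≤ s.card := hns.card_pos
  have hsx : ∑ i ∈ s, x i = 1 := by
    rw [← hsum]
    apply Finset.sum_subset (Finset.subset_univ s)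
    intro i _ hi
    by_contra h
    exact hi ((hmem i).mpr h)
  have hrow : ∀ i, i ∉ s → ∑ j, (if G.Adj i j then x i * x j else 0) = 0 := by
    intro i hi
    have hxi : x i = 0 := by by_contra h; exact hi ((hmem i).mpr h)
    refine Finset.sum_eq_zero fun j _ => ?_
    by_cases h : G.Adj i j <;> simp [h, hxi]
  have hQ1 : Qf G x = ∑ i ∈ s, ∑ j ∈ s, (if G.Adj i j then x i * x j else 0) := by
    unfold Qf
    rw [← Finset.sum_subset (Finset.subset_univ s) (fun i _ hi => hrow i hi)]
    refine Finset.sum_congr rfl fun i _ => ?_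
    apply (Finset.sum_subset (Finset.subset_univ s) ?_).symm
    intro j _ hj
    have hxj : x j = 0 := by by_contra h; exact hj ((hmem j).mpr h)
    by_cases h : G.Adj i j <;> simp [h, hxj]
  have hQ2 : Qf G x = (∑ i ∈ s, ∑ j ∈ s, x i * x j) - ∑ i ∈ s, x i ^ 2 := by
    rw [hQ1, ← Finset.sum_sub_distrib]
    refine Finset.sum_congr rfl fun i hi => ?_
    rw [← Finset.sum_erase_add s _ hi, ← Finset.sum_erase_add s (fun j => x i * x j) hi]
    have h1 : (if G.Adj i i then x i * x i else 0) = 0 := by simp [G.irrefl]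
    have h2 : ∑ j ∈ s.erase i, (if G.Adj i j then x i * x j else 0)
        = ∑ j ∈ s.erase i, x i * x j := by
      refine Finset.sum_congr rfl fun j hj => ?_
      have hji : j ≠ i := Finset.ne_of_mem_erase hj
      have : G.Adj i j := hcl i hi j (Finset.mem_of_mem_erase hj) hji.symm
      simp [this]
    rw [h1, h2]
    ring_nf
  have h11 : (∑ i ∈ s, ∑ j ∈ s, x i * x j) = 1 := by
    have e : ∑ i ∈ s, ∑ j ∈ s, x i * x j = ∑ i ∈ s, x i * ∑ j ∈ s, x j := by
      refine Finset.sum_congr rfl fun i _ => ?_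
      rw [Finset.mul_sum]
    rw [e, hsx]
    simp [hsx]
  have hQ3 : Qf G x = 1 - ∑ i ∈ s, x i ^ 2 := by
    rw [hQ2, h11]
  have hCS : (1 : ℝ) / s.card ≤ ∑ i ∈ s, x i ^ 2 := by
    have := sq_sum_le_card_mul_sum_sq (s := s) (f := x)
    rw [hsx] at this
    rw [div_le_iff₀ (by positivity)]
    linarith [this]
  have hfilter : (s ×ˢ s).filter (fun p => G.Adj p.1 p.2) = s.offDiag := by
    have hiff : ∀ p ∈ s ×ˢ s, G.Adj p.1 p.2 ↔ p.1 ≠ p.2 := by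
      intro p hp
      rw [Finset.mem_product] at hp
      exact ⟨G.ne_of_adj, fun h => hcl _ hp.1 _ hp.2 h⟩
    rw [Finset.filter_congr hiff]
    ext p; simp [Finset.mem_offDiag, and_assoc]
  rw [hfilter]
  have hcard : (s.offDiag.card : ℝ) = (s.card : ℝ) * s.card - s.card := by
    rw [Finset.offDiag_card]
    push_cast [Nat.cast_sub (Nat.le_mul_of_pos_left s.card hk1)]
    ring
  rw [hcard, hQ3]
  have hkpos : (0:ℝ) < s.card := by exact_mod_cast hk1
  have heq : ((s.card : ℝ) * s.card - s.card) / (s.card : ℝ) ^ 2 = 1 - 1 / s.card := by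
    field_simp
  rw [heq]
  linarith

lemma core (M : ℝ)
    (hM : ∀ A : Finset (Fin n), A.Nonempty →
      (((A ×ˢ A).filter fun p => G.Adj p.1 p.2).card : ℝ) / (A.card : ℝ) ^ 2 ≤ M) :
    ∀ (k : ℕ) (x : Fin n → ℝ), (∀ i, 0 ≤ x i) → ∑ i, x i = 1 →
      (univ.filter fun i => x i ≠ 0).card ≤ k → Qf G x ≤ M := by
  intro k
  induction k with
  | zero =>
    intro x hx hsum hcard
    exfalso
    rw [Nat.le_zero, Finset.card_eq_zero] at hcard
    have : ∀ i, x i = 0 := by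
      intro i
      by_contra h
      have : i ∈ univ.filter fun i => x i ≠ 0 := by simp [h]
      simp [hcard] at this
    rw [Finset.sum_congr rfl (fun i _ => this i)] at hsum
    simp at hsum
  | succ k ih =>
    intro x hx hsum hcard
    by_cases hcl : ∀ i ∈ univ.filter (fun k => x k ≠ 0), ∀ j ∈ univ.filter (fun k => x k ≠ 0),
        i ≠ j → G.Adj i j
    · obtain ⟨s, hns, hle⟩ := clique_bound G x hsum hcl
      exact hle.trans (hM s hns)
    · push_neg at hcl
      obtain ⟨i, hi, j, hj, hne, hnadj⟩ := hcl
      simp only [mem_filter, mem_univ, true_and] at hi hj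
      rcases le_total (rf G x j) (rf G x i) with h | h
      · obtain ⟨y, hy0, hy1, hyc, hyQ⟩ :=
          step G x hx hsum i j hi hj hne hnadj (by linarith)
        exact hyQ.trans (ih y hy0 hy1 (by omega))
      · have hnadj' : ¬ G.Adj j i := fun hh => hnadj ((G.adj_comm j i).mp hh)
        obtain ⟨y, hy0, hy1, hyc, hyQ⟩ :=
          step G x hx hsum j i hj hi hne.symm hnadj' (by linarith)
        exact hyQ.trans (ih y hy0 hy1 (by omega))

lemma Qf_abs_le (x : Fin n → ℝ) : Qf G x ≤ Qf G (fun i => |x i|) := by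
  unfold Qf
  refine Finset.sum_le_sum fun i _ => Finset.sum_le_sum fun j _ => ?_
  by_cases h : G.Adj i j
  · simp only [h, if_true]
    calc x i * x j ≤ |x i * x j| := le_abs_self _
    _ = |x i| * |x j| := abs_mul _ _
  · simp [h]

lemma Qf_smul (c : ℝ) (x : Fin n → ℝ) :
    Qf G (fun i => c * x i) = c ^ 2 * Qf G x := by
  unfold Qf
  rw [Finset.mul_sum]
  refine Finset.sum_congr rfl fun i _ => ?_
  rw [Finset.mul_sum]
  refine Finset.sum_congr rfl fun j _ => ?_
  by_cases h : G.Adj i j <;> simp [h] <;> ring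

lemma Qf_indicator (A : Finset (Fin n)) :
    Qf G (fun i => if i ∈ A then (1:ℝ) else 0)
      = (((A ×ˢ A).filter fun p => G.Adj p.1 p.2).card : ℝ) := by
  rw [Finset.card_filter]
  push_cast
  rw [Finset.sum_product]
  unfold Qf
  rw [← Finset.sum_subset (Finset.subset_univ A) ?h1]
  · refine Finset.sum_congr rfl fun i hi => ?_
    rw [← Finset.sum_subset (Finset.subset_univ A) ?h2]
    · refine Finset.sum_congr rfl fun j hj => ?_
      simp [hi, hj]
    · intro j _ hj
      by_cases h : G.Adj i j <;> simp [h, hj]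
  · intro i _ hi
    refine Finset.sum_eq_zero fun j _ => ?_
    by_cases h : G.Adj i j <;> simp [h, hi]

end Stmt17Aux


/-- for a finite simple graph,
`max_{∅ ≠ A ⊆ V} 2e(A)/(#A)² = sup_{0 ≤ x ≠ 0} 2∑_{{i,j}∈E} x_i x_j / ‖x‖₁²
= max_{x ≠ 0} 2∑_{{i,j}∈E} x_i x_j / ‖x‖₁²`, where `2e(A)` is written as the number of
ordered adjacent pairs in `A` and `2∑_{{i,j}∈E} x_i x_j` as a sum over ordered pairs. -/
theorem stmt_17 {n : ℕ} (hn : 1 ≤ n) (G : SimpleGraph (Fin n)) [DecidableRel G.Adj] :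
    ∃ M : ℝ,
      IsGreatest {r | ∃ A : Finset (Fin n), A.Nonempty ∧
          r = (((A ×ˢ A).filter fun p => G.Adj p.1 p.2).card : ℝ) / (A.card : ℝ) ^ 2} M ∧
      M = sSup {r | ∃ x : Fin n → ℝ, (∀ i, 0 ≤ x i) ∧ x ≠ 0 ∧
          r = (∑ i, ∑ j, if G.Adj i j then x i * x j else 0) / (∑ i, |x i|) ^ 2} ∧
      IsGreatest {r | ∃ x : Fin n → ℝ, x ≠ 0 ∧
          r = (∑ i, ∑ j, if G.Adj i j then x i * x j else 0) / (∑ i, |x i|) ^ 2} M := by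
  classical
  have hFne : Nonempty (Fin n) := ⟨⟨0, hn⟩⟩
  set f : Finset (Fin n) → ℝ := fun A =>
    (((A ×ˢ A).filter fun p => G.Adj p.1 p.2).card : ℝ) / (A.card : ℝ) ^ 2 with hf
  obtain ⟨M, ⟨A₀, hA₀m, hA₀⟩, hub⟩ :
      ∃ M : ℝ, (∃ A : Finset (Fin n), A.Nonempty ∧ f A = M) ∧
        ∀ A : Finset (Fin n), A.Nonempty → f A ≤ M := by
    have hTne : ((univ.powerset.filter Finset.Nonempty).image f).Nonempty := by
      refine ⟨f univ, Finset.mem_image_of_mem f ?_⟩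
      simp [Finset.univ_nonempty]
    refine ⟨((univ.powerset.filter Finset.Nonempty).image f).max' hTne, ?_, ?_⟩
    · obtain ⟨A, hA, hfa⟩ := Finset.mem_image.mp (Finset.max'_mem _ hTne)
      simp only [Finset.mem_filter, Finset.mem_powerset] at hA
      exact ⟨A, hA.2, hfa⟩
    · intro A hA
      apply Finset.le_max'
      exact Finset.mem_image_of_mem f (by simp [hA])
  -- key upper bound for arbitrary x ≠ 0
  have key : ∀ x : Fin n → ℝ, x ≠ 0 →
      (∑ i, ∑ j, if G.Adj i j then x i * x j else 0) / (∑ i, |x i|) ^ 2 ≤ M := by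
    intro x hx
    have hc : 0 < ∑ i, |x i| := by
      obtain ⟨i, hi⟩ := Function.ne_iff.mp hx
      exact Finset.sum_pos' (fun j _ => abs_nonneg _) ⟨i, mem_univ i, abs_pos.mpr hi⟩
    have hc' : (∑ i, |x i|) ≠ 0 := ne_of_gt hc
    have hy0 : ∀ i, 0 ≤ (fun i => (1/(∑ i, |x i|)) * |x i|) i := by
      intro i
      have := abs_nonneg (x i)
      positivity
    have hy1 : ∑ i, (1/(∑ i, |x i|)) * |x i| = 1 := by
      rw [← Finset.mul_sum]
      field_simp
    have hfilt : (univ.filter fun i => (1/(∑ i', |x i'|)) * |x i| ≠ 0).card ≤ n :=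
      le_trans (Finset.card_filter_le _ _) (le_of_eq (by simp))
    have hQy : Stmt17Aux.Qf G (fun i => (1/(∑ i, |x i|)) * |x i|) ≤ M :=
      Stmt17Aux.core G M (fun A hA => hub A hA) n
        (fun i => (1/(∑ i, |x i|)) * |x i|) hy0 hy1 hfilt
    have h1 : Stmt17Aux.Qf G (fun i => (1/(∑ i, |x i|)) * |x i|)
        = (1/(∑ i, |x i|))^2 * Stmt17Aux.Qf G (fun i => |x i|) :=
      Stmt17Aux.Qf_smul G (1/(∑ i, |x i|)) (fun i => |x i|)
    have h2 : Stmt17Aux.Qf G x ≤ Stmt17Aux.Qf G (fun i => |x i|) := Stmt17Aux.Qf_abs_le G x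
    show Stmt17Aux.Qf G x / (∑ i, |x i|) ^ 2 ≤ M
    have hc2 : (0:ℝ) < (∑ i, |x i|) ^ 2 := by positivity
    rw [div_le_iff₀ hc2]
    rw [h1] at hQy
    have h3 : Stmt17Aux.Qf G (fun i => |x i|) ≤ M * (∑ i, |x i|) ^ 2 := by
      have h4 := mul_le_mul_of_nonneg_left hQy (le_of_lt hc2)
      calc Stmt17Aux.Qf G (fun i => |x i|)
          = (∑ i, |x i|) ^ 2 * ((1/(∑ i, |x i|)) ^ 2 * Stmt17Aux.Qf G (fun i => |x i|)) := by
            field_simp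
        _ ≤ (∑ i, |x i|) ^ 2 * M := h4
        _ = M * (∑ i, |x i|) ^ 2 := by ring
    linarith
  -- the indicator vector of A₀
  obtain ⟨a, ha⟩ := hA₀m
  have hx₀ne : (fun i => if i ∈ A₀ then (1:ℝ) else 0) ≠ 0 := by
    refine Function.ne_iff.mpr ⟨a, ?_⟩
    simp [ha]
  have hx₀0 : ∀ i, 0 ≤ if i ∈ A₀ then (1:ℝ) else 0 := by
    intro i
    by_cases h : i ∈ A₀ <;> simp [h]
  have habs : ∑ i, |if i ∈ A₀ then (1:ℝ) else 0| = (A₀.card : ℝ) := by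
    have e : ∀ i, |if i ∈ A₀ then (1:ℝ) else 0| = if i ∈ A₀ then (1:ℝ) else 0 :=
      fun i => abs_of_nonneg (hx₀0 i)
    rw [Finset.sum_congr rfl fun i _ => e i]
    simp
  have hMx₀ : M = (∑ i, ∑ j, if G.Adj i j then
        (if i ∈ A₀ then (1:ℝ) else 0) * (if j ∈ A₀ then (1:ℝ) else 0) else 0)
      / (∑ i, |if i ∈ A₀ then (1:ℝ) else 0|) ^ 2 := by
    have hQx₀ : Stmt17Aux.Qf G (fun i => if i ∈ A₀ then (1:ℝ) else 0)
        = (((A₀ ×ˢ A₀).filter fun p => G.Adj p.1 p.2).card : ℝ) := Stmt17Aux.Qf_indicator G A₀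
    show M = Stmt17Aux.Qf G (fun i => if i ∈ A₀ then (1:ℝ) else 0)
      / (∑ i, |if i ∈ A₀ then (1:ℝ) else 0|) ^ 2
    rw [hQx₀, habs, ← hA₀]
  refine ⟨M, ⟨⟨A₀, ⟨a, ha⟩, hA₀.symm⟩, ?_⟩, ?_,
    ⟨⟨fun i => if i ∈ A₀ then (1:ℝ) else 0, hx₀ne, hMx₀⟩, ?_⟩⟩
  · rintro r ⟨A, hA, rfl⟩
    exact hub A hA
  · symm
    apply IsGreatest.csSup_eq
    constructor
    · exact ⟨fun i => if i ∈ A₀ then (1:ℝ) else 0, hx₀0, hx₀ne, hMx₀⟩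
    · rintro r ⟨x, _, hxne, rfl⟩
      exact key x hxne
  · rintro r ⟨x, hxne, rfl⟩
    exact key x hxne
end

section
/- Let n ≥ 2 and let W = (w_{ij}) be a symmetric n×n real matrix with nonnegative entries and zero diagonal (the weighted adjacency matrix of a weighted graph on V = {1,…,n}). Then max over S ⊆ V of ∑_{i∈S, j∉S} w_{ij} (the maximum cut) equals sup over pairs x, y ∈ ℝⁿ_{≥0} ∖ {0} with ⟨x, y⟩ = 0 of ( ∑_{i,j=1}^n w_{ij} x_i y_j ) / ( ‖x‖_∞·‖y‖_∞ ), where ‖x‖_∞ = max_i x_i. -/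
open Finset

/-- the maximum cut of a weighted graph equals
`sup { ∑_{i,j} w_{ij} x_i y_j / (‖x‖_∞ ‖y‖_∞) : x, y ∈ ℝⁿ_{≥0} ∖ {0}, ⟨x, y⟩ = 0 }`. -/
theorem stmt_19 {n : ℕ} (hn : 2 ≤ n) (W : Matrix (Fin n) (Fin n) ℝ)
    (hsym : W.IsSymm) (hnn : ∀ i j, 0 ≤ W i j) (hdiag : ∀ i, W i i = 0) :
    ∃ M : ℝ,
      IsGreatest {r | ∃ S : Finset (Fin n), r = ∑ i ∈ S, ∑ j ∈ Sᶜ, W i j} M ∧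
      M = sSup {r | ∃ x y : Fin n → ℝ, (∀ i, 0 ≤ x i) ∧ (∀ i, 0 ≤ y i) ∧
          x ≠ 0 ∧ y ≠ 0 ∧ (∑ i, x i * y i) = 0 ∧
          r = (∑ i, ∑ j, W i j * x i * y j) / ((⨆ i, x i) * (⨆ i, y i))} := by
  classical
  haveI : NeZero n := ⟨by omega⟩
  set cut : Finset (Fin n) → ℝ := fun S => ∑ i ∈ S, ∑ j ∈ Sᶜ, W i j with hcut
  have hFne : (Finset.univ.image cut).Nonempty :=
    ⟨cut ∅, mem_image_of_mem _ (mem_univ ∅)⟩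
  set M := (Finset.univ.image cut).max' hFne with hM
  have hMmem : ∃ S, M = cut S := by
    obtain ⟨S, -, hS⟩ := mem_image.mp ((Finset.univ.image cut).max'_mem hFne)
    exact ⟨S, hS.symm⟩
  have hMub : ∀ S : Finset (Fin n), cut S ≤ M :=
    fun S => Finset.le_max' _ _ (mem_image_of_mem _ (mem_univ S))
  have hcutnn : ∀ S, 0 ≤ cut S :=
    fun S => Finset.sum_nonneg fun i _ => Finset.sum_nonneg fun j _ => hnn i j
  have hMnn : 0 ≤ M := le_trans (hcutnn ∅) (hMub ∅)
  -- sup of an indicator vector is 1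
  have supind : ∀ S : Finset (Fin n), S.Nonempty →
      (⨆ i, (if i ∈ S then (1:ℝ) else 0)) = 1 := by
    rintro S ⟨i0, hi0⟩
    apply le_antisymm
    · refine ciSup_le fun i => ?_
      split <;> norm_num
    · have h := le_ciSup (f := fun i => (if i ∈ S then (1:ℝ) else 0))
        (Set.Finite.bddAbove (Set.finite_range _)) i0
      simpa [hi0] using h
  -- sup of a nonneg nonzero vector is positive
  have suppos : ∀ x : Fin n → ℝ, (∀ i, 0 ≤ x i) → x ≠ 0 → 0 < ⨆ i, x i := by
    intro x hx hx0
    obtain ⟨i, hi⟩ := Function.ne_iff.mp hx0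
    have hi' : x i ≠ 0 := hi
    have hpos : 0 < x i := lt_of_le_of_ne (hx i) (Ne.symm hi')
    exact lt_of_lt_of_le hpos (le_ciSup (Set.Finite.bddAbove (Set.finite_range x)) i)
  refine ⟨M, ⟨hMmem, ?_⟩, ?_⟩
  · rintro r ⟨S, rfl⟩; exact hMub S
  -- the relaxation set
  set T : Set ℝ := {r | ∃ x y : Fin n → ℝ, (∀ i, 0 ≤ x i) ∧ (∀ i, 0 ≤ y i) ∧
      x ≠ 0 ∧ y ≠ 0 ∧ (∑ i, x i * y i) = 0 ∧
      r = (∑ i, ∑ j, W i j * x i * y j) / ((⨆ i, x i) * (⨆ i, y i))} with hT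
  -- upper bound
  have hub : ∀ r ∈ T, r ≤ M := by
    rintro r ⟨x, y, hx, hy, hx0, hy0, hxy, rfl⟩
    have hsx := suppos x hx hx0
    have hsy := suppos y hy hy0
    have horth : ∀ i, x i * y i = 0 := by
      intro i
      exact (Finset.sum_eq_zero_iff_of_nonneg
        (fun i _ => mul_nonneg (hx i) (hy i))).mp hxy i (mem_univ i)
    set A : Finset (Fin n) := Finset.univ.filter (fun i => x i ≠ 0) with hA
    have hyA : ∀ j ∈ A, y j = 0 := by
      intro j hj
      have hxj : x j ≠ 0 := (mem_filter.mp hj).2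
      rcases mul_eq_zero.mp (horth j) with h | h
      · exact absurd h hxj
      · exact h
    have hxle : ∀ i, x i ≤ ⨆ k, x k :=
      fun i => le_ciSup (Set.Finite.bddAbove (Set.finite_range x)) i
    have hyle : ∀ i, y i ≤ ⨆ k, y k :=
      fun i => le_ciSup (Set.Finite.bddAbove (Set.finite_range y)) i
    rw [div_le_iff₀ (mul_pos hsx hsy)]
    calc ∑ i, ∑ j, W i j * x i * y j
        = ∑ i ∈ A, ∑ j, W i j * x i * y j := by
          symm
          apply Finset.sum_subset (subset_univ A)
          intro i _ hi
          have hxi : x i = 0 := by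
            by_contra h
            exact hi (mem_filter.mpr ⟨mem_univ i, h⟩)
          simp [hxi]
      _ = ∑ i ∈ A, ∑ j ∈ Aᶜ, W i j * x i * y j := by
          refine Finset.sum_congr rfl fun i _ => ?_
          symm
          apply Finset.sum_subset (subset_univ Aᶜ)
          intro j _ hj
          have hjA : j ∈ A := by simpa using hj
          simp [hyA j hjA]
      _ ≤ ∑ i ∈ A, ∑ j ∈ Aᶜ, W i j * (⨆ k, x k) * (⨆ k, y k) := by
          refine Finset.sum_le_sum fun i _ => Finset.sum_le_sum fun j _ => ?_
          have hw := hnn i j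
          calc W i j * x i * y j
              ≤ W i j * (⨆ k, x k) * y j :=
                mul_le_mul_of_nonneg_right (mul_le_mul_of_nonneg_left (hxle i) hw) (hy j)
            _ ≤ W i j * (⨆ k, x k) * (⨆ k, y k) :=
                mul_le_mul_of_nonneg_left (hyle j) (mul_nonneg hw hsx.le)
      _ = cut A * ((⨆ k, x k) * (⨆ k, y k)) := by
          rw [hcut]
          rw [Finset.sum_mul]
          refine Finset.sum_congr rfl fun i _ => ?_
          rw [Finset.sum_mul]
          exact Finset.sum_congr rfl fun j _ => by ring
      _ ≤ M * ((⨆ k, x k) * (⨆ k, y k)) :=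
          mul_le_mul_of_nonneg_right (hMub A) (mul_nonneg hsx.le hsy.le)
  -- M is attained in T
  have hmemT : M ∈ T := by
    obtain ⟨S, hSne, hScne, hScut⟩ :
        ∃ S : Finset (Fin n), S.Nonempty ∧ Sᶜ.Nonempty ∧ cut S = M := by
      obtain ⟨S0, hS0⟩ := hMmem
      by_cases h1 : S0.Nonempty ∧ S0ᶜ.Nonempty
      · exact ⟨S0, h1.1, h1.2, hS0.symm⟩
      · have hM0 : M = 0 := by
          rcases not_and_or.mp h1 with h | h
          · have he : S0 = ∅ := not_nonempty_iff_eq_empty.mp h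
            simp [hS0, he, hcut]
          · have he : S0ᶜ = ∅ := not_nonempty_iff_eq_empty.mp h
            simp [hS0, hcut, he]
        have hcompl : ((({0} : Finset (Fin n)))ᶜ).Nonempty := by
          refine ⟨⟨1, by omega⟩, ?_⟩
          simp only [Finset.mem_compl, Finset.mem_singleton]
          exact fun hcon => by simpa using congrArg Fin.val hcon
        refine ⟨{0}, Finset.singleton_nonempty _, hcompl, ?_⟩
        have h2 := hMub {0}
        have h3 := hcutnn {0}
        linarith
    refine ⟨fun i => if i ∈ S then 1 else 0, fun i => if i ∈ Sᶜ then 1 else 0,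
      ?_, ?_, ?_, ?_, ?_, ?_⟩
    · intro i; dsimp only; split <;> norm_num
    · intro i; dsimp only; split <;> norm_num
    · obtain ⟨i0, hi0⟩ := hSne
      intro h
      have := congrFun h i0
      simp [hi0] at this
    · obtain ⟨i0, hi0⟩ := hScne
      intro h
      have := congrFun h i0
      simp [hi0] at this
    · refine Finset.sum_eq_zero fun i _ => ?_
      by_cases h : i ∈ S <;> simp [h]
    · rw [supind S hSne, supind Sᶜ hScne, mul_one, div_one]
      rw [← hScut, hcut]
      simp only [mul_ite, ite_mul, mul_one, mul_zero, one_mul, zero_mul,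
        Finset.sum_ite_irrel, Finset.sum_const_zero, Finset.sum_ite_mem,
        Finset.univ_inter]
  exact (IsGreatest.csSup_eq ⟨hmemT, hub⟩).symm
end
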